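/- For every ordinal α < ω₁, the set of conditions q ∈ Q with α_q > α is dense in Q: for every p ∈ Q there exists q ≤ p such that the height α_q of the tree T_q is greater than α. -/

import Mathlib

universe u

/-- The underlying data of a condition `p = (T_p, <_p, Π_p)` of the poset `Q`:
a set `tp` of countable ordinals carrying a strict order `lt` whose sets of
predecessors are well-ordered, together with a set `dp ⊆ ω₂` of indices and,
for each index `ξ`, a map `pi ξ` (intended as the partial isomorphism
`π^p_ξ`). -/
structure QPre : Type (u + 1) where
  /-- The underlying set of the tree, a set of ordinals. -/
  tp : Set Ordinal.{u}
  /-- The tree order. -/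
  lt : Ordinal.{u} → Ordinal.{u} → Prop
  /-- The index set of the isomorphisms. -/
  dp : Set Ordinal.{u}
  /-- The isomorphisms `π^p_ξ`, coded as total functions. -/
  pi : Ordinal.{u} → Ordinal.{u} → Ordinal.{u}
  lt_mem : ∀ x y, lt x y → x ∈ tp ∧ y ∈ tp
  wo : ∀ t, IsWellOrder {s : Ordinal.{u} // lt s t} (fun a b => lt a.1 b.1)

/-- The height of `t` in the tree of the condition `p`: the order type of the
set of its `p.lt`-predecessors. -/
noncomputable def QPre.ht (p : QPre.{u}) (t : Ordinal.{u}) : Ordinal.{u + 1} :=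
  @Ordinal.type {s : Ordinal.{u} // p.lt s t} (fun a b => p.lt a.1 b.1) (p.wo t)

/-- The height `α_p` of the tree of the condition `p`: the least ordinal `α`
such that the `α`-th level of the tree is empty. -/
noncomputable def QPre.alphap (p : QPre.{u}) : Ordinal.{u + 1} :=
  sInf {α | ∀ t ∈ p.tp, p.ht t ≠ α}

/-- The cone `(T_p)_x`: the set of elements of the tree comparable with `x`. -/
def QPre.cone (p : QPre.{u}) (x t : Ordinal.{u}) : Prop :=
  t ∈ p.tp ∧ (p.lt t x ∨ t = x ∨ p.lt x t)

/-- `f` is a tree isomorphism from the cone `(T_p)_x` onto the cone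
`(T_p)_y`. -/
def QPre.IsConeIso (p : QPre.{u}) (f : Ordinal.{u} → Ordinal.{u})
    (x y : Ordinal.{u}) : Prop :=
  (∀ t, p.cone x t → p.cone y (f t)) ∧
  (∀ s, p.cone y s → ∃ t, p.cone x t ∧ f t = s) ∧
  (∀ s t, p.cone x s → p.cone x t → f s = f t → s = t) ∧
  (∀ s t, p.cone x s → p.cone x t → (p.lt s t ↔ p.lt (f s) (f t)))

/-- `p` is a condition of the poset `Q`: `T_p` is a countable subset of `ω₁`,
`<_p` is a (strict) tree order on `T_p` of height `α_p` which is normal (every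
element is comparable with some element of every lower level), `D_p` is a
countable subset of `ω₂` and each `π^p_ξ` (`ξ ∈ D_p`) is a tree isomorphism
between two cones whose roots have the same height. -/
def IsQCond (p : QPre.{u}) : Prop :=
  p.tp ⊆ Set.Iio (Cardinal.aleph 1).ord ∧
  p.tp.Countable ∧
  (∀ x ∈ p.tp, ¬ p.lt x x) ∧
  (∀ x y z : Ordinal.{u}, p.lt x y → p.lt y z → p.lt x z) ∧
  (∀ t ∈ p.tp, p.ht t < p.alphap) ∧
  (∀ t ∈ p.tp, ∀ β < p.alphap, ∃ s ∈ p.tp, p.ht s = β ∧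
    (p.lt s t ∨ s = t ∨ p.lt t s)) ∧
  p.dp ⊆ Set.Iio (Cardinal.aleph 2).ord ∧
  p.dp.Countable ∧
  (∀ ξ ∈ p.dp, ∃ x ∈ p.tp, ∃ y ∈ p.tp, p.ht x = p.ht y ∧
    p.IsConeIso (p.pi ξ) x y)

/-- The order of the poset `Q`: `q ≤ p` iff `T_q` end-extends `T_p` (i.e.
`T_p` is exactly the set of elements of `T_q` of height `< α_p` and `<_p` is
the restriction of `<_q`), `D_p ⊆ D_q`, and `π^q_ξ ↾ T_p = π^p_ξ` for every
`ξ ∈ D_p`. -/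
def QLe (q p : QPre.{u}) : Prop :=
  p.tp = {t ∈ q.tp | q.ht t < p.alphap} ∧
  (∀ x y : Ordinal.{u}, x ∈ p.tp → y ∈ p.tp → (p.lt x y ↔ q.lt x y)) ∧
  p.dp ⊆ q.dp ∧
  (∀ ξ ∈ p.dp, ∀ t ∈ p.tp, q.pi ξ t = p.pi ξ t)

/-!
Above each of countably many cofinal branches of `T_p` put a chain of `α + 1` new countable
ordinals: the resulting tree end-extends `T_p` and has height `α_p + α + 1 > α`. Every node of
`T_p` lies on one of the branches, which keeps the new tree normal. For each `ξ ∈ D_p` the family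
contains a branch `B` of the domain cone of `π_ξ` together with its image `π_ξ[B]`; extending
`π_ξ` by matching the chains above `B` and `π_ξ[B]` gives an isomorphism between the cones of
their lowest new nodes. A cofinal branch through a given node exists because `T_p` is countable:
climb along a sequence of nodes whose heights exhaust `α_p`.
-/

open Ordinal Set Function

theorem Ordinal.type_eq_of_strictMono {α : Type*} {r : α → α → Prop} [IsWellOrder α r]
    {o : Ordinal} (f : α → Ordinal) (hf : ∀ a b, r a b → f a < f b)
    (hrange : ∀ β, β ∈ range f ↔ β < o) : type r = o := by
  have h := lift_typein_top (PrincipalSeg.mk (RelEmbedding.ofMonotone f hf) o hrange)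
  dsimp only at h
  simpa using h.symm

theorem isWellOrder_of_strictMono {α : Type*} {r : α → α → Prop} (f : α → Ordinal)
    (hf : ∀ a b, r a b → f a < f b) (htri : ∀ a b, r a b ∨ a = b ∨ r b a) : IsWellOrder α r :=
  have : Std.Trichotomous r := ⟨fun a b hab hba => by have := htri a b; tauto⟩
  (RelEmbedding.ofMonotone f hf).isWellOrder

theorem Ordinal.exists_add_eq_of_le_of_lt {a b c : Ordinal} (hab : a ≤ b) (hb : b < a + c) :
    ∃ i < c, a + i = b :=
  ⟨b - a, (add_lt_add_iff_left a).1 (by rwa [Ordinal.add_sub_cancel_of_le hab]),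
    Ordinal.add_sub_cancel_of_le hab⟩

theorem countable_Iio_of_lt_ord_aleph_one {ι : Ordinal} (hι : ι < (Cardinal.aleph 1).ord) :
    (Iio ι).Countable := by
  rw [← Cardinal.le_aleph0_iff_set_countable, Cardinal.mk_Iio_ordinal, Cardinal.lift_le_aleph0]
  rwa [Cardinal.lt_ord, ← Cardinal.succ_aleph0, Order.lt_succ_iff] at hι

theorem exists_injective_not_mem_lt_ord_aleph_one (T : Type*) [Countable T]
    {S : Set Ordinal.{u}} (hS : S.Countable) (hS₁ : S ⊆ Iio (Cardinal.aleph 1).ord) :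
    ∃ code : T → Ordinal.{u},
      Injective code ∧ (∀ z, code z ∉ S) ∧ ∀ z, code z < (Cardinal.aleph 1).ord := by
  have := hS.to_subtype
  rw [Cardinal.ord_aleph] at hS₁ ⊢
  obtain ⟨e, he⟩ := countable_iff_exists_injective T |>.1 ‹_›
  let γ := ⨆ s : S, (s.1 + 1)
  have hγ : γ < ω₁ :=
    iSup_lt_omega_one fun s => (Cardinal.isSuccLimit_omega 1).add_one_lt (hS₁ s.2)
  refine ⟨fun z => γ + e z, fun a b h => he (by simpa using h), fun z hz => ?_,
    fun z => isPrincipal_add_omega 1 hγ ((natCast_lt_omega0 _).trans omega0_lt_omega_one)⟩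
  have : γ + e z + 1 ≤ γ := Ordinal.le_iSup (fun s : S => s.1 + 1) ⟨_, hz⟩
  exact (lt_add_one _).not_ge (this.trans le_self_add)

namespace QPre

variable {p : QPre.{u}}

theorem ht_eq_typein [IsTrans _ p.lt] {a b : Ordinal.{u}} (h : p.lt a b) :
    p.ht a = @typein _ (fun u v : {s // p.lt s b} => p.lt u.1 v.1) (p.wo b) ⟨a, h⟩ := by
  have := p.wo b
  rw [← type_subrel]
  have := p.wo a
  exact type_eq.2 ⟨RelIso.mk ⟨fun s => ⟨⟨s.1, trans_of p.lt s.2 h⟩, s.2⟩, fun c => ⟨c.1.1, c.2⟩,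
    fun _ => rfl, fun _ => rfl⟩ Iff.rfl⟩

theorem ht_lt_ht [IsTrans _ p.lt] {a b : Ordinal.{u}} (h : p.lt a b) :
    p.ht a < p.ht b := by
  have := p.wo b
  rw [ht_eq_typein h]
  exact typein_lt_type _ _

theorem exists_lt_ht_eq [IsTrans _ p.lt] {b : Ordinal.{u}} {β : Ordinal.{u + 1}}
    (hβ : β < p.ht b) : ∃ a, p.lt a b ∧ p.ht a = β := by
  have := p.wo b
  obtain ⟨c, rfl⟩ := typein_surj _ hβ
  exact ⟨c.1, c.2, ht_eq_typein c.2⟩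

theorem comparable_of_lt_of_lt {a b c : Ordinal.{u}} (ha : p.lt a c) (hb : p.lt b c) :
    p.lt a b ∨ a = b ∨ p.lt b a := by
  have := p.wo c
  rcases trichotomous_of (fun u v : {s // p.lt s c} => p.lt u.1 v.1) ⟨a, ha⟩ ⟨b, hb⟩
    with h | h | h
  exacts [Or.inl h, Or.inr (Or.inl (congrArg Subtype.val h)), Or.inr (Or.inr h)]

theorem ht_eq_of_strictMono {t : Ordinal.{u}} {o : Ordinal.{u + 1}}
    (f : Ordinal.{u} → Ordinal.{u + 1}) (hf : ∀ a b, p.lt a t → p.lt b t → p.lt a b → f a < f b)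
    (hrange : ∀ β, (∃ s, p.lt s t ∧ f s = β) ↔ β < o) : p.ht t = o :=
  @type_eq_of_strictMono _ _ (p.wo t) o (fun s => f s.1) (fun a b => hf a b a.2 b.2)
    (fun β => by simpa using hrange β)

theorem exists_ht_eq_of_lt_alphap {β : Ordinal.{u + 1}} (hβ : β < p.alphap) :
    ∃ t ∈ p.tp, p.ht t = β := by
  by_contra! h
  exact hβ.not_ge (csInf_le' h)

theorem alphap_eq_of_forall {γ : Ordinal.{u + 1}} (hlt : ∀ t ∈ p.tp, p.ht t < γ)
    (hex : ∀ β < γ, ∃ t ∈ p.tp, p.ht t = β) : p.alphap = γ := by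
  have hγ : γ ∈ {β | ∀ t ∈ p.tp, p.ht t ≠ β} := fun t ht => (hlt t ht).ne
  refine le_antisymm (csInf_le' hγ) (le_csInf ⟨γ, hγ⟩ fun β hβ => ?_)
  by_contra! h
  obtain ⟨t, ht, rfl⟩ := hex β h
  exact hβ t ht rfl

theorem cone_of_lt [IsTrans _ p.lt] {x s t : Ordinal.{u}} (ht : p.cone x t)
    (hst : p.lt s t) : p.cone x s := by
  refine ⟨(p.lt_mem _ _ hst).1, ?_⟩
  rcases ht.2 with h | rfl | h
  exacts [Or.inl (trans_of p.lt hst h), Or.inl hst, comparable_of_lt_of_lt hst h]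

theorem IsConeIso.ht_eq [IsTrans _ p.lt] {f : Ordinal.{u} → Ordinal.{u}}
    {x y : Ordinal.{u}} (hf : p.IsConeIso f x y) {t : Ordinal.{u}} (ht : p.cone x t) :
    p.ht (f t) = p.ht t := by
  obtain ⟨hmaps, hsurj, -, hlt⟩ := hf
  refine (ht_eq_of_strictMono (p.ht ∘ f) (fun a b ha hb hab => ?_) fun β => ?_).symm
  · exact ht_lt_ht ((hlt a b (cone_of_lt ht ha) (cone_of_lt ht hb)).1 hab)
  constructor
  · rintro ⟨s, hs, rfl⟩
    exact ht_lt_ht ((hlt s t (cone_of_lt ht hs) ht).1 hs)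
  · intro hβ
    obtain ⟨s', hs', rfl⟩ := exists_lt_ht_eq hβ
    obtain ⟨s, hs, rfl⟩ := hsurj s' (cone_of_lt (hmaps t ht) hs')
    exact ⟨s, (hlt s t hs ht).2 hs', rfl⟩

open Relation

theorem comparable_of_reflGen_of_reflGen {a b c : Ordinal.{u}} (ha : ReflGen p.lt a c)
    (hb : ReflGen p.lt b c) : p.lt a b ∨ a = b ∨ p.lt b a := by
  rcases ha with _ | ha <;> rcases hb with _ | hb
  exacts [Or.inr (Or.inl rfl), Or.inr (Or.inr hb), Or.inl ha, comparable_of_lt_of_lt ha hb]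

structure IsCofinalBranch (p : QPre.{u}) (B : Set Ordinal.{u}) : Prop where
  subset : B ⊆ p.tp
  comparable : ∀ a ∈ B, ∀ b ∈ B, p.lt a b ∨ a = b ∨ p.lt b a
  mem_of_lt : ∀ {a b}, b ∈ B → p.lt a b → a ∈ B
  exists_ht_eq : ∀ β < p.alphap, ∃ b ∈ B, p.ht b = β

theorem exists_seq_ht_cofinal [IsTrans _ p.lt] (hcnt : p.tp.Countable)
    (hlt : ∀ t ∈ p.tp, p.ht t < p.alphap)
    (hnorm : ∀ t ∈ p.tp, ∀ β < p.alphap, ∃ s ∈ p.tp, p.ht s = β ∧ (p.lt s t ∨ s = t ∨ p.lt t s))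
    {t₀ : Ordinal.{u}} (ht₀ : t₀ ∈ p.tp) :
    ∃ s : ℕ → Ordinal.{u}, s 0 = t₀ ∧ (∀ n, s n ∈ p.tp) ∧ (∀ n, ReflGen p.lt (s n) (s (n + 1))) ∧
      ∀ β < p.alphap, ∃ n, β ≤ p.ht (s n) := by
  obtain ⟨g, hg⟩ : ∃ g : ℕ → Ordinal.{u + 1}, Iio p.alphap = range g := by
    refine ((hcnt.image p.ht).mono fun β hβ => ?_).exists_eq_range ⟨p.ht t₀, hlt t₀ ht₀⟩
    obtain ⟨t, ht, rfl⟩ := exists_ht_eq_of_lt_alphap hβ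
    exact mem_image_of_mem _ ht
  have step : ∀ n, ∀ s ∈ p.tp, ∃ s' ∈ p.tp, ReflGen p.lt s s' ∧ g n ≤ p.ht s' := by
    intro n s hs
    have hg_lt : g n ∈ Iio p.alphap := hg ▸ mem_range_self n
    obtain ⟨s', hs', hht, hcmp⟩ := hnorm s hs _ (max_lt hg_lt (hlt s hs))
    refine ⟨s', hs', ?_, hht ▸ le_max_left _ _⟩
    rcases hcmp with h | rfl | h
    · exact absurd (hht ▸ le_max_right _ _) (ht_lt_ht h).not_ge
    · exact ReflGen.refl
    · exact ReflGen.single h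
  choose next hnext_mem hnext_rel hnext_ht using step
  let s : ℕ → p.tp := fun n => Nat.rec ⟨t₀, ht₀⟩ (fun n x => ⟨_, hnext_mem n x.1 x.2⟩) n
  refine ⟨fun n => (s n).1, rfl, fun n => (s n).2, fun n => hnext_rel n _ _, fun β hβ => ?_⟩
  obtain ⟨n, rfl⟩ : β ∈ range g := hg ▸ hβ
  exact ⟨n + 1, hnext_ht n _ _⟩

theorem exists_isCofinalBranch_mem [IsTrans _ p.lt] (hcnt : p.tp.Countable)
    (hlt : ∀ t ∈ p.tp, p.ht t < p.alphap)
    (hnorm : ∀ t ∈ p.tp, ∀ β < p.alphap, ∃ s ∈ p.tp, p.ht s = β ∧ (p.lt s t ∨ s = t ∨ p.lt t s))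
    {t₀ : Ordinal.{u}} (ht₀ : t₀ ∈ p.tp) : ∃ B, p.IsCofinalBranch B ∧ t₀ ∈ B := by
  obtain ⟨s, rfl, hs_mem, hs_succ, hs_cof⟩ := exists_seq_ht_cofinal hcnt hlt hnorm ht₀
  have hs_mono {n m : ℕ} (h : n ≤ m) : ReflGen p.lt (s n) (s m) :=
    Nat.rel_of_forall_rel_succ_of_le (ReflGen p.lt) hs_succ h
  refine ⟨{a | ∃ n, ReflGen p.lt a (s n)}, ⟨?_, ?_, ?_, ?_⟩, 0, ReflGen.refl⟩
  · rintro a ⟨n, _ | h⟩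
    exacts [hs_mem n, (p.lt_mem _ _ h).1]
  · rintro a ⟨n, ha⟩ b ⟨m, hb⟩
    exact comparable_of_reflGen_of_reflGen (_root_.trans ha (hs_mono (le_max_left n m)))
      (_root_.trans hb (hs_mono (le_max_right n m)))
  · rintro a b ⟨n, hb⟩ hab
    exact ⟨n, _root_.trans (ReflGen.single hab) hb⟩
  · intro β hβ
    obtain ⟨n, hn⟩ := hs_cof β hβ
    obtain rfl | hlt' := hn.eq_or_lt
    · exact ⟨s n, ⟨n, ReflGen.refl⟩, rfl⟩
    · obtain ⟨a, ha, rfl⟩ := exists_lt_ht_eq hlt'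
      exact ⟨a, ⟨n, ReflGen.single ha⟩, rfl⟩

theorem exists_isCofinalBranch [IsTrans _ p.lt] (hcnt : p.tp.Countable)
    (hlt : ∀ t ∈ p.tp, p.ht t < p.alphap)
    (hnorm : ∀ t ∈ p.tp, ∀ β < p.alphap, ∃ s ∈ p.tp, p.ht s = β ∧ (p.lt s t ∨ s = t ∨ p.lt t s)) :
    ∃ B, p.IsCofinalBranch B := by
  rcases p.tp.eq_empty_or_nonempty with hempty | ⟨t, ht⟩
  · have h0 : p.alphap = 0 := alphap_eq_of_forall (by simp [hempty]) (by simp)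
    exact ⟨∅, empty_subset _, by simp, by simp, by simp [h0]⟩
  · obtain ⟨B, hB, -⟩ := exists_isCofinalBranch_mem hcnt hlt hnorm ht
    exact ⟨B, hB⟩

theorem IsConeIso.image_isCofinalBranch [IsTrans _ p.lt] {f : Ordinal.{u} → Ordinal.{u}}
    {x y : Ordinal.{u}} (hf : p.IsConeIso f x y) {B : Set Ordinal.{u}} (hB : p.IsCofinalBranch B)
    (hBx : ∀ b ∈ B, p.cone x b) : p.IsCofinalBranch (f '' B) := by
  have ⟨hmaps, hsurj, _, hlt⟩ := hf
  refine ⟨?_, ?_, ?_, ?_⟩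
  · rintro _ ⟨b, hb, rfl⟩
    exact (hmaps b (hBx b hb)).1
  · rintro _ ⟨a, ha, rfl⟩ _ ⟨b, hb, rfl⟩
    rcases hB.comparable a ha b hb with h | rfl | h
    · exact Or.inl ((hlt a b (hBx a ha) (hBx b hb)).1 h)
    · exact Or.inr (Or.inl rfl)
    · exact Or.inr (Or.inr ((hlt b a (hBx b hb) (hBx a ha)).1 h))
  · rintro s _ ⟨b, hb, rfl⟩ hsb
    obtain ⟨a, ha, rfl⟩ := hsurj s (cone_of_lt (hmaps b (hBx b hb)) hsb)
    exact ⟨a, hB.mem_of_lt hb ((hlt a b ha (hBx b hb)).2 hsb), rfl⟩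
  · intro β hβ
    obtain ⟨b, hb, rfl⟩ := hB.exists_ht_eq β hβ
    exact ⟨f b, mem_image_of_mem f hb, hf.ht_eq (hBx b hb)⟩

end QPre

/-- The data for end-extending the tree of the condition `p` by a chain of length `ι` above each
cofinal branch `B j`: the `i`-th node of the chain above `B j` is the new ordinal `code (j, i)`.
Each `π_ξ` is extended by mapping the chain above `B (src ξ)` onto the chain above `B (tgt ξ)`. -/
structure ChainExtension (p : QPre.{u}) (ι : Ordinal.{u + 1}) where
  cond : IsQCond p
  I : Type (u + 1)
  index_nonempty : Nonempty I
  B : I → Set Ordinal.{u}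
  isCofinalBranch : ∀ j, p.IsCofinalBranch (B j)
  exists_mem_B : ∀ t ∈ p.tp, ∃ j, t ∈ B j
  code : I × Iio ι → Ordinal.{u}
  code_injective : Injective code
  code_not_mem : ∀ z, code z ∉ p.tp
  code_lt : ∀ z, code z < (Cardinal.aleph 1).ord
  countable_range_code : (range code).Countable
  src : p.dp → I
  tgt : p.dp → I
  exists_isConeIso_src : ∀ ξ : p.dp, ∃ x y, p.IsConeIso (p.pi ξ) x y ∧ ∀ b ∈ B (src ξ), p.cone x b
  B_tgt : ∀ ξ : p.dp, B (tgt ξ) = p.pi ξ '' B (src ξ)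
  pos : 0 < ι

namespace ChainExtension

variable {p : QPre.{u}} {ι : Ordinal.{u + 1}}

theorem isTrans (E : ChainExtension p ι) : IsTrans _ p.lt := ⟨E.cond.2.2.2.1⟩

theorem ht_lt_alphap (E : ChainExtension p ι) {t : Ordinal.{u}} (ht : t ∈ p.tp) :
    p.ht t < p.alphap :=
  E.cond.2.2.2.2.1 t ht

variable (E : ChainExtension p ι)

theorem B_subset (j : E.I) : E.B j ⊆ p.tp := (E.isCofinalBranch j).subset

def lt (a b : Ordinal.{u}) : Prop :=
  p.lt a b ∨ (∃ z, b = E.code z ∧ a ∈ E.B z.1) ∨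
    ∃ z w, a = E.code z ∧ b = E.code w ∧ z.1 = w.1 ∧ z.2 < w.2

noncomputable def height : Ordinal.{u} → Ordinal.{u + 1} :=
  extend E.code (fun z => p.alphap + z.2) p.ht

open scoped Classical in
noncomputable def pi (ξ : Ordinal.{u}) : Ordinal.{u} → Ordinal.{u} :=
  if hξ : ξ ∈ p.dp then
    extend (fun i => E.code (E.src ⟨ξ, hξ⟩, i)) (fun i => E.code (E.tgt ⟨ξ, hξ⟩, i)) (p.pi ξ)
  else p.pi ξ

variable {E}

theorem code_not_mem_of_mem {t : Ordinal.{u}} (ht : t ∈ p.tp) : t ∉ range E.code := by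
  rintro ⟨z, rfl⟩
  exact E.code_not_mem z ht

theorem height_of_mem {t : Ordinal.{u}} (ht : t ∈ p.tp) : E.height t = p.ht t :=
  extend_apply' _ _ _ (code_not_mem_of_mem ht)

theorem height_code (z : E.I × Iio ι) : E.height (E.code z) = p.alphap + z.2 :=
  E.code_injective.extend_apply _ _ _

theorem pi_of_mem (ξ : Ordinal.{u}) {t : Ordinal.{u}} (ht : t ∈ p.tp) : E.pi ξ t = p.pi ξ t := by
  unfold pi
  split_ifs
  · exact extend_apply' _ _ _ fun ⟨i, hi⟩ => code_not_mem_of_mem ht ⟨_, hi⟩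
  · rfl

theorem pi_code (ξ : p.dp) (i : Iio ι) :
    E.pi ξ (E.code (E.src ξ, i)) = E.code (E.tgt ξ, i) := by
  simp only [pi, ξ.2, dite_true]
  exact (E.code_injective.comp (Prod.mk_right_injective _)).extend_apply _ _ _

theorem lt_iff_of_mem {a b : Ordinal.{u}} (hb : b ∈ p.tp) : E.lt a b ↔ p.lt a b := by
  refine ⟨?_, Or.inl⟩
  rintro (h | ⟨z, rfl, -⟩ | ⟨-, w, -, rfl, -⟩)
  exacts [h, absurd hb (E.code_not_mem z), absurd hb (E.code_not_mem w)]

theorem lt_code_iff {a : Ordinal.{u}} {w : E.I × Iio ι} :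
    E.lt a (E.code w) ↔ a ∈ E.B w.1 ∨ ∃ i, a = E.code (w.1, i) ∧ i < w.2 := by
  constructor
  · rintro (h | ⟨z, hz, ha⟩ | ⟨z, w', rfl, hw', hzw, hlt⟩)
    · exact absurd (p.lt_mem _ _ h).2 (E.code_not_mem w)
    · exact Or.inl (E.code_injective hz ▸ ha)
    · obtain rfl := E.code_injective hw'
      exact Or.inr ⟨z.2, by rw [← hzw], hlt⟩
  · rintro (h | ⟨i, rfl, hi⟩)
    · exact Or.inr (Or.inl ⟨w, rfl, h⟩)
    · exact Or.inr (Or.inr ⟨(w.1, i), w, rfl, rfl, rfl, hi⟩)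

theorem code_lt_code_iff {z w : E.I × Iio ι} :
    E.lt (E.code z) (E.code w) ↔ z.1 = w.1 ∧ z.2 < w.2 := by
  rw [lt_code_iff]
  constructor
  · rintro (h | ⟨i, he, hi⟩)
    · exact absurd (E.B_subset w.1 h) (E.code_not_mem z)
    · rw [E.code_injective he]
      exact ⟨rfl, hi⟩
  · rintro ⟨h1, h2⟩
    exact Or.inr ⟨z.2, by rw [← h1], h2⟩

theorem not_code_lt_of_mem {z : E.I × Iio ι} {b : Ordinal.{u}} (hb : b ∈ p.tp) :
    ¬E.lt (E.code z) b := by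
  rw [lt_iff_of_mem hb]
  exact fun h => E.code_not_mem z (p.lt_mem _ _ h).1

theorem lt_mem {a b : Ordinal.{u}} (h : E.lt a b) :
    a ∈ p.tp ∪ range E.code ∧ b ∈ p.tp ∪ range E.code := by
  rcases h with h | ⟨z, rfl, ha⟩ | ⟨z, w, rfl, rfl, -⟩
  · exact ⟨Or.inl (p.lt_mem _ _ h).1, Or.inl (p.lt_mem _ _ h).2⟩
  · exact ⟨Or.inl (E.B_subset z.1 ha), Or.inr ⟨z, rfl⟩⟩
  · exact ⟨Or.inr ⟨z, rfl⟩, Or.inr ⟨w, rfl⟩⟩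

theorem lt_irrefl (a : Ordinal.{u}) : ¬E.lt a a := by
  rintro (h | ⟨z, rfl, ha⟩ | ⟨z, w, rfl, he, -, hlt⟩)
  · exact E.cond.2.2.1 a (p.lt_mem _ _ h).1 h
  · exact E.code_not_mem z (E.B_subset z.1 ha)
  · obtain rfl := E.code_injective he
    exact hlt.false

theorem lt_trans {a b c : Ordinal.{u}} (hab : E.lt a b) (hbc : E.lt b c) : E.lt a c := by
  have := E.isTrans
  rcases hbc with h | ⟨w, rfl, hb⟩ | ⟨w, v, rfl, rfl, hwv, hlt⟩
  · exact Or.inl (trans_of p.lt ((lt_iff_of_mem (p.lt_mem _ _ h).1).1 hab) h)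
  · have hab' := (lt_iff_of_mem (E.B_subset w.1 hb)).1 hab
    exact Or.inr (Or.inl ⟨w, rfl, (E.isCofinalBranch w.1).mem_of_lt hb hab'⟩)
  · rcases lt_code_iff.1 hab with h | ⟨i, rfl, hi⟩
    · exact Or.inr (Or.inl ⟨v, rfl, hwv ▸ h⟩)
    · exact Or.inr (Or.inr ⟨(w.1, i), v, rfl, rfl, hwv, hi.trans hlt⟩)

theorem height_lt_height {a b : Ordinal.{u}} (h : E.lt a b) : E.height a < E.height b := by
  have := E.isTrans
  rcases h with h | ⟨z, rfl, ha⟩ | ⟨z, w, rfl, rfl, hzw, hlt⟩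
  · rw [height_of_mem (p.lt_mem _ _ h).1, height_of_mem (p.lt_mem _ _ h).2]
    exact p.ht_lt_ht h
  · rw [height_of_mem (E.B_subset z.1 ha), height_code]
    exact (E.ht_lt_alphap (E.B_subset z.1 ha)).trans_le le_self_add
  · rw [height_code, height_code]
    exact (add_lt_add_iff_left _).2 hlt

theorem comparable_of_lt_of_lt {a b c : Ordinal.{u}} (ha : E.lt a c) (hb : E.lt b c) :
    E.lt a b ∨ a = b ∨ E.lt b a := by
  rcases (lt_mem ha).2 with hc | ⟨w, rfl⟩
  · rw [lt_iff_of_mem hc] at ha hb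
    rcases p.comparable_of_lt_of_lt ha hb with h | h | h
    exacts [Or.inl (Or.inl h), Or.inr (Or.inl h), Or.inr (Or.inr (Or.inl h))]
  rcases lt_code_iff.1 ha with ha | ⟨i, rfl, -⟩ <;> rcases lt_code_iff.1 hb with hb | ⟨i', rfl, -⟩
  · rcases (E.isCofinalBranch w.1).comparable a ha b hb with h | h | h
    exacts [Or.inl (Or.inl h), Or.inr (Or.inl h), Or.inr (Or.inr (Or.inl h))]
  · exact Or.inl (lt_code_iff.2 (Or.inl ha))
  · exact Or.inr (Or.inr (lt_code_iff.2 (Or.inl hb)))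
  · rcases lt_trichotomy i i' with h | rfl | h
    · exact Or.inl (code_lt_code_iff.2 ⟨rfl, h⟩)
    · exact Or.inr (Or.inl rfl)
    · exact Or.inr (Or.inr (code_lt_code_iff.2 ⟨rfl, h⟩))

variable (E)

noncomputable def toQPre : QPre.{u} where
  tp := p.tp ∪ range E.code
  lt := E.lt
  dp := p.dp
  pi := E.pi
  lt_mem _ _ := lt_mem
  wo _ := isWellOrder_of_strictMono (fun s => E.height s.1) (fun _ _ => height_lt_height)
    fun a b => (comparable_of_lt_of_lt a.2 b.2).imp_right (Or.imp_left Subtype.ext)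

variable {E}

theorem ht_toQPre {t : Ordinal.{u}} (ht : t ∈ E.toQPre.tp) : E.toQPre.ht t = E.height t := by
  have := E.isTrans
  refine QPre.ht_eq_of_strictMono E.height (fun _ _ _ _ => height_lt_height) fun β => ?_
  refine ⟨fun ⟨s, hs, hsβ⟩ => hsβ ▸ height_lt_height hs, fun hβ => ?_⟩
  rcases ht with ht | ⟨w, rfl⟩
  · rw [height_of_mem ht] at hβ
    obtain ⟨s, hs, rfl⟩ := p.exists_lt_ht_eq hβ
    exact ⟨s, Or.inl hs, height_of_mem (p.lt_mem _ _ hs).1⟩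
  rw [height_code] at hβ
  rcases lt_or_ge β p.alphap with hβ' | hβ'
  · obtain ⟨b, hb, rfl⟩ := (E.isCofinalBranch w.1).exists_ht_eq β hβ'
    exact ⟨b, lt_code_iff.2 (Or.inl hb), height_of_mem (E.B_subset w.1 hb)⟩
  · obtain ⟨i, hi, rfl⟩ := exists_add_eq_of_le_of_lt hβ' hβ
    exact ⟨E.code (w.1, ⟨i, hi.trans w.2.2⟩), code_lt_code_iff.2 ⟨rfl, hi⟩, height_code _⟩

theorem ht_toQPre_of_mem {t : Ordinal.{u}} (ht : t ∈ p.tp) : E.toQPre.ht t = p.ht t :=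
  (ht_toQPre (Or.inl ht)).trans (height_of_mem ht)

theorem ht_toQPre_code (z : E.I × Iio ι) : E.toQPre.ht (E.code z) = p.alphap + z.2 :=
  (ht_toQPre (Or.inr ⟨z, rfl⟩)).trans (height_code z)

theorem ht_toQPre_lt {t : Ordinal.{u}} (ht : t ∈ E.toQPre.tp) :
    E.toQPre.ht t < p.alphap + ι := by
  rcases ht with ht | ⟨z, rfl⟩
  · rw [ht_toQPre_of_mem ht]
    exact (E.ht_lt_alphap ht).trans_le le_self_add
  · rw [ht_toQPre_code]
    exact (add_lt_add_iff_left _).2 z.2.2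

theorem alphap_toQPre : E.toQPre.alphap = p.alphap + ι := by
  refine QPre.alphap_eq_of_forall (fun t ht => ht_toQPre_lt ht) fun β hβ => ?_
  rcases lt_or_ge β p.alphap with hβ' | hβ'
  · obtain ⟨t, ht, rfl⟩ := p.exists_ht_eq_of_lt_alphap hβ'
    exact ⟨t, Or.inl ht, ht_toQPre_of_mem ht⟩
  · obtain ⟨i, hi, rfl⟩ := exists_add_eq_of_le_of_lt hβ' hβ
    obtain ⟨j⟩ := E.index_nonempty
    exact ⟨E.code (j, ⟨i, hi⟩), Or.inr ⟨_, rfl⟩, ht_toQPre_code _⟩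

theorem cone_toQPre_code_iff {w : E.I × Iio ι} {s : Ordinal.{u}} :
    E.toQPre.cone (E.code w) s ↔ s ∈ E.B w.1 ∨ ∃ i, s = E.code (w.1, i) := by
  constructor
  · rintro ⟨-, h | rfl | h⟩
    · exact (lt_code_iff.1 h).imp_right fun ⟨i, hi, _⟩ => ⟨i, hi⟩
    · exact Or.inr ⟨w.2, rfl⟩
    · rcases (lt_mem h).2 with hu | ⟨z, rfl⟩
      · exact absurd h (not_code_lt_of_mem hu)
      · exact Or.inr ⟨z.2, by rw [(code_lt_code_iff.1 h).1]⟩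
  · rintro (h | ⟨i, rfl⟩)
    · exact ⟨Or.inl (E.B_subset w.1 h), Or.inl (lt_code_iff.2 (Or.inl h))⟩
    · refine ⟨Or.inr ⟨_, rfl⟩, ?_⟩
      rcases lt_trichotomy i w.2 with h | rfl | h
      · exact Or.inl (code_lt_code_iff.2 ⟨rfl, h⟩)
      · exact Or.inr (Or.inl rfl)
      · exact Or.inr (Or.inr (code_lt_code_iff.2 ⟨rfl, h⟩))

theorem exists_ht_eq_comparable {t : Ordinal.{u}} (ht : t ∈ E.toQPre.tp) {β : Ordinal.{u + 1}}
    (hβ : β < E.toQPre.alphap) :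
    ∃ s ∈ E.toQPre.tp, E.toQPre.ht s = β ∧ (E.lt s t ∨ s = t ∨ E.lt t s) := by
  rw [alphap_toQPre] at hβ
  rcases lt_or_ge β p.alphap with hβ' | hβ'
  · rcases ht with ht | ⟨z, rfl⟩
    · obtain ⟨s, hs, rfl, hcmp⟩ := E.cond.2.2.2.2.2.1 t ht β hβ'
      exact ⟨s, Or.inl hs, ht_toQPre_of_mem hs, hcmp.imp Or.inl (Or.imp_right Or.inl)⟩
    · obtain ⟨b, hb, rfl⟩ := (E.isCofinalBranch z.1).exists_ht_eq β hβ'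
      exact ⟨b, (cone_toQPre_code_iff.2 (Or.inl hb)).1, ht_toQPre_of_mem (E.B_subset _ hb),
        (cone_toQPre_code_iff.2 (Or.inl hb)).2⟩
  · obtain ⟨i, hi, rfl⟩ := exists_add_eq_of_le_of_lt hβ' hβ
    rcases ht with ht | ⟨z, rfl⟩
    · obtain ⟨j, hj⟩ := E.exists_mem_B t ht
      exact ⟨E.code (j, ⟨i, hi⟩), Or.inr ⟨_, rfl⟩, ht_toQPre_code _,
        Or.inr (Or.inr (lt_code_iff.2 (Or.inl hj)))⟩
    · have hcone :=
        (cone_toQPre_code_iff (w := z) (s := E.code (z.1, ⟨i, hi⟩))).2 (Or.inr ⟨_, rfl⟩)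
      exact ⟨_, hcone.1, ht_toQPre_code _, hcone.2⟩

theorem isConeIso_toQPre_pi (ξ : p.dp) (i₀ : Iio ι) :
    E.toQPre.IsConeIso (E.pi ξ) (E.code (E.src ξ, i₀)) (E.code (E.tgt ξ, i₀)) := by
  obtain ⟨x, y, hf, hBx⟩ := E.exists_isConeIso_src ξ
  have hB : ∀ b ∈ E.B (E.src ξ), E.pi ξ b = p.pi ξ b ∧ p.pi ξ b ∈ E.B (E.tgt ξ) := fun b hb =>
    ⟨pi_of_mem ξ (E.B_subset _ hb), E.B_tgt ξ ▸ mem_image_of_mem _ hb⟩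
  refine ⟨fun t ht => ?_, fun s hs => ?_, fun s t hs ht he => ?_, fun s t hs ht => ?_⟩
  · rcases cone_toQPre_code_iff.1 ht with ht | ⟨i, rfl⟩
    · exact cone_toQPre_code_iff.2 (Or.inl ((hB t ht).1 ▸ (hB t ht).2))
    · exact cone_toQPre_code_iff.2 (Or.inr ⟨i, pi_code ξ i⟩)
  · rcases cone_toQPre_code_iff.1 hs with hs | ⟨i, rfl⟩
    · rw [E.B_tgt ξ] at hs
      obtain ⟨b, hb, rfl⟩ := hs
      exact ⟨b, cone_toQPre_code_iff.2 (Or.inl hb), (hB b hb).1⟩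
    · exact ⟨_, cone_toQPre_code_iff.2 (Or.inr ⟨i, rfl⟩), pi_code ξ i⟩
  · rcases cone_toQPre_code_iff.1 hs with hs | ⟨i, rfl⟩ <;>
      rcases cone_toQPre_code_iff.1 ht with ht | ⟨i', rfl⟩
    · rw [(hB s hs).1, (hB t ht).1] at he
      exact hf.2.2.1 s t (hBx s hs) (hBx t ht) he
    · rw [(hB s hs).1, pi_code] at he
      exact absurd (he ▸ E.B_subset _ (hB s hs).2) (E.code_not_mem _)
    · rw [(hB t ht).1, pi_code] at he
      exact absurd (he ▸ E.B_subset _ (hB t ht).2) (E.code_not_mem _)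
    · rw [pi_code, pi_code] at he
      obtain rfl : i = i' := congrArg Prod.snd (E.code_injective he)
      rfl
  · change E.lt s t ↔ E.lt (E.pi ξ s) (E.pi ξ t)
    rcases cone_toQPre_code_iff.1 hs with hs | ⟨i, rfl⟩ <;>
      rcases cone_toQPre_code_iff.1 ht with ht | ⟨i', rfl⟩
    · rw [(hB s hs).1, (hB t ht).1, lt_iff_of_mem (E.B_subset _ ht),
        lt_iff_of_mem (E.B_subset _ (hB t ht).2)]
      exact hf.2.2.2 s t (hBx s hs) (hBx t ht)
    · rw [(hB s hs).1, pi_code]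
      exact iff_of_true (lt_code_iff.2 (Or.inl hs)) (lt_code_iff.2 (Or.inl (hB s hs).2))
    · rw [(hB t ht).1, pi_code]
      exact iff_of_false (not_code_lt_of_mem (E.B_subset _ ht))
        (not_code_lt_of_mem (E.B_subset _ (hB t ht).2))
    · rw [pi_code, pi_code, code_lt_code_iff, code_lt_code_iff]
      simp

variable (E)

theorem isQCond_toQPre : IsQCond E.toQPre := by
  obtain ⟨hp₁, hp₂, -, -, -, -, hp₇, hp₈, -⟩ := E.cond
  refine ⟨?_, hp₂.union E.countable_range_code, fun x _ => lt_irrefl x, fun _ _ _ => lt_trans,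
    fun t ht => alphap_toQPre ▸ ht_toQPre_lt ht, fun t ht β hβ => exists_ht_eq_comparable ht hβ,
    hp₇, hp₈, fun ξ hξ => ?_⟩
  · rintro t (ht | ⟨z, rfl⟩)
    exacts [hp₁ ht, E.code_lt z]
  · let i₀ : Iio ι := ⟨0, E.pos⟩
    exact ⟨E.code (E.src ⟨ξ, hξ⟩, i₀), Or.inr ⟨_, rfl⟩, E.code (E.tgt ⟨ξ, hξ⟩, i₀),
      Or.inr ⟨_, rfl⟩, by rw [ht_toQPre_code, ht_toQPre_code],
      isConeIso_toQPre_pi (E := E) ⟨ξ, hξ⟩ i₀⟩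

theorem toQPre_le : QLe E.toQPre p := by
  refine ⟨?_, fun _ _ _ hy => (lt_iff_of_mem hy).symm, subset_rfl, fun ξ _ _ ht => pi_of_mem ξ ht⟩
  ext t
  refine ⟨fun ht => ⟨Or.inl ht, (ht_toQPre_of_mem ht).symm ▸ E.ht_lt_alphap ht⟩, ?_⟩
  rintro ⟨ht | ⟨z, rfl⟩, hlt⟩
  · exact ht
  · rw [ht_toQPre_code] at hlt
    exact absurd hlt le_self_add.not_gt

theorem nonempty_of_isQCond (hp : IsQCond p) (hι : ι < (Cardinal.aleph 1).ord) (hι₀ : 0 < ι) :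
    Nonempty (ChainExtension p ι) := by
  have ⟨hp₁, hp₂, _, htr, hlt, hnorm, _, hp₈, hp₉⟩ := hp
  have : IsTrans _ p.lt := ⟨htr⟩
  choose x hx y _ _ hxy using fun ξ : p.dp => hp₉ ξ.1 ξ.2
  choose Bt hBt hmem using fun t : p.tp => p.exists_isCofinalBranch_mem hp₂ hlt hnorm t.2
  obtain ⟨B₀, hB₀⟩ := p.exists_isCofinalBranch hp₂ hlt hnorm
  let I := Option (p.tp ⊕ p.dp)
  let B : I → Set Ordinal.{u} := fun j =>
    j.elim B₀ (Sum.elim Bt fun ξ => p.pi ξ '' Bt ⟨x ξ, hx ξ⟩)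
  have hBx (ξ : p.dp) : ∀ b ∈ Bt ⟨x ξ, hx ξ⟩, p.cone (x ξ) b := fun b hb =>
    ⟨(hBt _).subset hb, (hBt _).comparable b hb _ (hmem _)⟩
  have hB : ∀ j, p.IsCofinalBranch (B j)
    | none => hB₀
    | some (.inl t) => hBt t
    | some (.inr ξ) => (hxy ξ).image_isCofinalBranch (hBt _) (hBx ξ)
  have : Countable (I × Iio ι) := by
    have := hp₂.to_subtype
    have := hp₈.to_subtype
    have := (countable_Iio_of_lt_ord_aleph_one hι).to_subtype
    infer_instance
  obtain ⟨code, hcode, hcode_not_mem, hcode_lt⟩ :=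
    exists_injective_not_mem_lt_ord_aleph_one (I × Iio ι) hp₂ hp₁
  exact ⟨{ cond := hp, I, index_nonempty := ⟨none⟩, B, isCofinalBranch := hB
           exists_mem_B := fun t ht => ⟨some (.inl ⟨t, ht⟩), hmem _⟩
           code, code_injective := hcode, code_not_mem := hcode_not_mem, code_lt := hcode_lt
           countable_range_code := countable_range code
           src := fun ξ => some (.inl ⟨x ξ, hx ξ⟩), tgt := fun ξ => some (.inr ξ)
           exists_isConeIso_src := fun ξ => ⟨x ξ, y ξ, hxy ξ, hBx ξ⟩
           B_tgt := fun _ => rfl, pos := hι₀ }⟩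

end ChainExtension

/-- For every ordinal `α < ω₁`, the set of conditions `q ∈ Q` whose tree has
height `α_q > α` is dense in `Q`. -/
theorem Q_tall_conditions_dense (α : Ordinal.{u + 1})
    (hα : α < (Cardinal.aleph 1).ord) (p : QPre.{u}) (hp : IsQCond p) :
    ∃ q : QPre.{u}, IsQCond q ∧ QLe q p ∧ α < q.alphap := by
  have hα₁ : α + 1 < (Cardinal.aleph 1).ord := by
    rw [Cardinal.ord_aleph] at hα ⊢
    exact (Cardinal.isSuccLimit_omega 1).add_one_lt hα
  obtain ⟨E⟩ := ChainExtension.nonempty_of_isQCond hp hα₁ (zero_lt_one.trans_le le_add_self)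
  refine ⟨E.toQPre, E.isQCond_toQPre, E.toQPre_le, ?_⟩
  rw [E.alphap_toQPre]
  exact (lt_add_one α).trans_le le_add_self
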